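/- Injectivity of the Radon transform: Let f₁, f₂ : ℝ^p → ℝ be integrable functions. If for every unit vector θ ∈ ℝ^p there is an orthonormal basis {θ, e₁, …, e_{p−1}} of ℝ^p extending θ such that R(f₁)(θ, u) = R(f₂)(θ, u) for almost every u ∈ ℝ, then f₁ = f₂ almost everywhere on ℝ^p. -/

import Mathlib

/-! Fourier slice theorem: orthonormal coordinates `(u, s)` with `x = u • θ + ∑ sⱼ • eⱼ` preserve
Lebesgue measure, so Fubini computes `𝓕 f (r • θ)` as the one-dimensional Fourier transform of
`u ↦ R f (θ, u)` at `r`. Equal Radon transforms therefore give `𝓕 f₁ = 𝓕 f₂` on all of `ℝ^p`, and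
the Fourier transform is injective on `L¹`: every smooth compactly supported `ψ` is the Fourier
transform of a Schwartz function `φ`, and `∫ 𝓕 φ • f = ∫ φ • 𝓕 f` determines the pairing of `f`
with `ψ`. -/

open scoped ContDiff
open MeasureTheory FourierTransform RealInnerProductSpace SchwartzMap

noncomputable def radon (p : ℕ) (f : EuclideanSpace ℝ (Fin p) → ℝ)
    (θ : EuclideanSpace ℝ (Fin p)) (e : Fin (p - 1) → EuclideanSpace ℝ (Fin p)) (u : ℝ) : ℝ :=
  ∫ s : EuclideanSpace ℝ (Fin (p - 1)), f (u • θ + ∑ j, s j • e j)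

section FourierInjective

variable {V : Type*} [NormedAddCommGroup V] [InnerProductSpace ℝ V] [FiniteDimensional ℝ V]
  [MeasurableSpace V] [BorelSpace V]

theorem integral_smul_eq_integral_fourierInv_smul_fourier {f : V → ℂ} (hf : Integrable f)
    {ψ : V → ℝ} (hψ : ContDiff ℝ ∞ ψ) (hψc : HasCompactSupport ψ) :
    ∫ x, ψ x • f x = ∫ ξ, 𝓕⁻ (fun x ↦ (ψ x : ℂ)) ξ • 𝓕 f ξ := by
  set Ψ : 𝓢(V, ℂ) := (hψc.comp_left Complex.ofReal_zero).toSchwartzMap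
    (Complex.ofRealCLM.contDiff.comp hψ)
  have hΨ : 𝓕 ((𝓕⁻ Ψ : 𝓢(V, ℂ)) : V → ℂ) = fun x ↦ (ψ x : ℂ) := by
    rw [← SchwartzMap.fourier_coe, FourierTransform.fourier_fourierInv_eq]; rfl
  calc ∫ x, ψ x • f x = ∫ x, 𝓕 ((𝓕⁻ Ψ : 𝓢(V, ℂ)) : V → ℂ) x • f x := by
        simp only [hΨ, Complex.real_smul, smul_eq_mul]
    _ = ∫ ξ, (𝓕⁻ Ψ : 𝓢(V, ℂ)) ξ • 𝓕 f ξ := by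
        have := VectorFourier.integral_fourierIntegral_smul_eq_flip (L := innerₗ V)
          Real.continuous_fourierChar continuous_inner ((𝓕⁻ Ψ).integrable (μ := volume)) hf
        rwa [flip_innerₗ] at this
    _ = _ := by rw [SchwartzMap.fourierInv_coe]; rfl

theorem MeasureTheory.Integrable.ae_eq_of_fourier_eq {f g : V → ℂ} (hf : Integrable f)
    (hg : Integrable g) (h : 𝓕 f = 𝓕 g) : f =ᵐ[volume] g :=
  ae_eq_of_integral_contDiff_smul_eq hf.locallyIntegrable hg.locallyIntegrable
    fun ψ hψ hψc ↦ by
      rw [integral_smul_eq_integral_fourierInv_smul_fourier hf hψ hψc,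
        integral_smul_eq_integral_fourierInv_smul_fourier hg hψ hψc, h]

end FourierInjective

theorem exists_norm_eq_one_smul_eq {E : Type*} [NormedAddCommGroup E] [NormedSpace ℝ E]
    [Nontrivial E] (ξ : E) : ∃ r : ℝ, ∃ θ : E, ‖θ‖ = 1 ∧ r • θ = ξ := by
  by_cases hξ : ξ = 0
  · obtain ⟨θ, hθ⟩ := exists_norm_eq E zero_le_one
    exact ⟨0, θ, hθ, by rw [zero_smul, hξ]⟩
  · exact ⟨‖ξ‖, ‖ξ‖⁻¹ • ξ, norm_smul_inv_norm hξ, smul_inv_smul₀ (norm_ne_zero_iff.2 hξ) ξ⟩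

namespace OrthonormalBasis

variable {V : Type*} [NormedAddCommGroup V] [InnerProductSpace ℝ V]
  [MeasurableSpace V] [BorelSpace V] {κ : Type*} [Fintype κ]

noncomputable def lineProdEquiv (b : OrthonormalBasis (Unit ⊕ κ) ℝ V) :
    (ℝ × EuclideanSpace ℝ κ) ≃ᵐ V :=
  ((MeasurableEquiv.funUnique Unit ℝ).symm.prodCongr
    (MeasurableEquiv.toLp 2 (κ → ℝ)).symm).trans <|
  (MeasurableEquiv.sumPiEquivProdPi fun _ : Unit ⊕ κ ↦ ℝ).symm.trans <|
  (MeasurableEquiv.toLp 2 (Unit ⊕ κ → ℝ)).trans b.repr.symm.toHomeomorph.toMeasurableEquiv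

theorem measurePreserving_lineProdEquiv [FiniteDimensional ℝ V]
    (b : OrthonormalBasis (Unit ⊕ κ) ℝ V) :
    MeasurePreserving b.lineProdEquiv volume volume :=
  (b.measurePreserving_repr_symm.comp
    (EuclideanSpace.volume_preserving_symm_measurableEquiv_toLp (Unit ⊕ κ)).symm).comp <|
  (volume_measurePreserving_sumPiEquivProdPi_symm fun _ : Unit ⊕ κ ↦ ℝ).comp <|
  ((volume_preserving_funUnique Unit ℝ).symm _).prod
    (EuclideanSpace.volume_preserving_symm_measurableEquiv_toLp κ)

theorem repr_lineProdEquiv (b : OrthonormalBasis (Unit ⊕ κ) ℝ V) (u : ℝ)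
    (s : EuclideanSpace ℝ κ) :
    b.repr (b.lineProdEquiv (u, s)) = WithLp.toLp 2 (Sum.elim (fun _ ↦ u) s) :=
  b.repr.apply_symm_apply _

theorem lineProdEquiv_apply (b : OrthonormalBasis (Unit ⊕ κ) ℝ V) (u : ℝ)
    (s : EuclideanSpace ℝ κ) :
    b.lineProdEquiv (u, s) = u • b (Sum.inl ()) + ∑ j, s j • b (Sum.inr j) := by
  rw [← b.sum_repr (b.lineProdEquiv (u, s)), Fintype.sum_sum_type, Fintype.sum_unique,
    repr_lineProdEquiv]
  rfl

theorem inner_lineProdEquiv_apply_inl (b : OrthonormalBasis (Unit ⊕ κ) ℝ V) (u : ℝ)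
    (s : EuclideanSpace ℝ κ) : ⟪b.lineProdEquiv (u, s), b (Sum.inl ())⟫ = u := by
  rw [real_inner_comm, ← b.repr_apply_apply, repr_lineProdEquiv]
  rfl

end OrthonormalBasis

section FourierSlice

variable {V : Type*} [NormedAddCommGroup V] [InnerProductSpace ℝ V] [FiniteDimensional ℝ V]
  [MeasurableSpace V] [BorelSpace V] {κ : Type*} [Fintype κ]

theorem OrthonormalBasis.fourier_smul_eq_fourier_integral_lineProdEquiv
    (b : OrthonormalBasis (Unit ⊕ κ) ℝ V) {f : V → ℂ} (hf : Integrable f) (r : ℝ) :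
    𝓕 f (r • b (Sum.inl ())) = 𝓕 (fun u : ℝ ↦ ∫ s, f (b.lineProdEquiv (u, s))) r := by
  have hM := b.measurePreserving_lineProdEquiv
  have hF : Integrable (fun x ↦ 𝐞 (-⟪x, r • b (Sum.inl ())⟫) • f x) :=
    (VectorFourier.fourierIntegral_convergent_iff (L := innerₗ V) Real.continuous_fourierChar
      continuous_inner _).2 hf
  have hfM : Integrable (fun q ↦ 𝐞 (-⟪b.lineProdEquiv q, r • b (Sum.inl ())⟫) •
      f (b.lineProdEquiv q)) :=
    (hM.integrable_comp_emb b.lineProdEquiv.measurableEmbedding).2 hF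
  calc 𝓕 f (r • b (Sum.inl ()))
      = ∫ q, 𝐞 (-⟪b.lineProdEquiv q, r • b (Sum.inl ())⟫) • f (b.lineProdEquiv q) := by
        rw [Real.fourier_eq]
        exact (hM.integral_comp' fun x ↦ 𝐞 (-⟪x, r • b (Sum.inl ())⟫) • f x).symm
    _ = ∫ u, ∫ s, 𝐞 (-⟪b.lineProdEquiv (u, s), r • b (Sum.inl ())⟫) •
          f (b.lineProdEquiv (u, s)) := by
        rw [Measure.volume_eq_prod] at hfM ⊢
        exact integral_prod _ hfM
    _ = ∫ u, 𝐞 (-(u * r)) • ∫ s, f (b.lineProdEquiv (u, s)) := by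
        congr 1 with u
        simp only [Circle.smul_def, smul_eq_mul]
        rw [← integral_const_mul]
        congr 1 with s
        rw [real_inner_smul_right, b.inner_lineProdEquiv_apply_inl, mul_comm u]
    _ = _ := by rw [Real.fourier_real_eq]

theorem fourier_smul_eq_fourier_sliceIntegral {θ : V} {e : κ → V}
    (ho : Orthonormal ℝ (Sum.elim (fun _ : Unit ↦ θ) e))
    (hs : Submodule.span ℝ (Set.range (Sum.elim (fun _ : Unit ↦ θ) e)) = ⊤)
    {f : V → ℂ} (hf : Integrable f) (r : ℝ) :
    𝓕 f (r • θ) = 𝓕 (fun u : ℝ ↦ ∫ s : EuclideanSpace ℝ κ, f (u • θ + ∑ j, s j • e j)) r := by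
  simpa [OrthonormalBasis.lineProdEquiv_apply] using
    (OrthonormalBasis.mk ho hs.ge).fourier_smul_eq_fourier_integral_lineProdEquiv hf r

end FourierSlice

theorem fourier_ofReal_smul_eq_fourier_ofReal_radon {p : ℕ} {f : EuclideanSpace ℝ (Fin p) → ℝ}
    (hf : Integrable f) {θ : EuclideanSpace ℝ (Fin p)} {e : Fin (p - 1) → EuclideanSpace ℝ (Fin p)}
    (ho : Orthonormal ℝ (Sum.elim (fun _ : Unit ↦ θ) e))
    (hs : Submodule.span ℝ (Set.range (Sum.elim (fun _ : Unit ↦ θ) e)) = ⊤) (r : ℝ) :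
    𝓕 (fun x ↦ (f x : ℂ)) (r • θ) = 𝓕 (fun u ↦ (radon p f θ e u : ℂ)) r := by
  rw [fourier_smul_eq_fourier_sliceIntegral ho hs (hf.ofReal : Integrable fun x ↦ (f x : ℂ))]
  simp only [radon, integral_complex_ofReal]

/-- Injectivity of the Radon transform: if two integrable functions have almost everywhere
equal Radon slices in every direction, they agree almost everywhere. -/
theorem radon_injective (p : ℕ) (hp : 1 ≤ p)
    (f₁ f₂ : EuclideanSpace ℝ (Fin p) → ℝ)
    (hf₁ : Integrable f₁) (hf₂ : Integrable f₂)
    (h : ∀ θ : EuclideanSpace ℝ (Fin p), ‖θ‖ = 1 →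
      ∃ e : Fin (p - 1) → EuclideanSpace ℝ (Fin p),
        Orthonormal ℝ (Sum.elim (fun _ : Unit => θ) e) ∧
        Submodule.span ℝ (Set.range (Sum.elim (fun _ : Unit => θ) e)) = ⊤ ∧
        ∀ᵐ u : ℝ, radon p f₁ θ e u = radon p f₂ θ e u) :
    f₁ =ᵐ[volume] f₂ := by
  have : Nonempty (Fin p) := ⟨⟨0, hp⟩⟩
  have hfourier : 𝓕 (fun x ↦ (f₁ x : ℂ)) = 𝓕 (fun x ↦ (f₂ x : ℂ)) := by
    funext ξ
    obtain ⟨r, θ, hθ, rfl⟩ := exists_norm_eq_one_smul_eq ξ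
    obtain ⟨e, ho, hs, hradon⟩ := h θ hθ
    rw [fourier_ofReal_smul_eq_fourier_ofReal_radon hf₁ ho hs,
      fourier_ofReal_smul_eq_fourier_ofReal_radon hf₂ ho hs]
    exact Real.fourier_congr_ae (hradon.mono fun u hu ↦ by rw [hu]) r
  filter_upwards [hf₁.ofReal.ae_eq_of_fourier_eq hf₂.ofReal hfourier] with x hx
  exact_mod_cast hx
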